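/- Let F be a free group on generators y_1, ..., y_{n-1}, and let K_{n-1} = F / ∏_{i=1}^{n-1} [⟨⟨y_i⟩⟩, ⟨⟨y_i⟩⟩], where ⟨⟨y_i⟩⟩ denotes the normal closure of y_i in F. Then γ^n(K_{n-1}) = {1}, i.e., K_{n-1} is nilpotent of class at most n-1. -/

import Mathlib

/-!
Induction on the number `m` of generators, for any group `G` generated by `g₁, …, gₘ` in which
each normal closure `⟨⟨gᵢ⟩⟩` is abelian. Killing `⟨⟨gᵢ⟩⟩` leaves a group of the same kind with
`m - 1` generators, so by induction `γₘ(G) ≤ ⟨⟨gᵢ⟩⟩` for every `i`. Since `⟨⟨gᵢ⟩⟩` is abelian and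
contains `gᵢ`, every element of `γₘ(G)` commutes with all the generators, i.e. `γₘ(G)` is central
and `γₘ₊₁(G) = ⊥`. The link group `K_m` is of this kind, generated by the images of the `yᵢ`.
-/

open Subgroup Set

variable {G H : Type*} [Group G] [Group H]

theorem Subgroup.lowerCentralSeries_quotient_eq_bot_iff (N : Subgroup G) [N.Normal] (k : ℕ) :
    lowerCentralSeries (⊤ : Subgroup (G ⧸ N)) k = ⊥ ↔
      lowerCentralSeries (⊤ : Subgroup G) k ≤ N := by
  rw [← map_top_of_surjective _ (QuotientGroup.mk'_surjective N), ← map_lowerCentralSeries,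
    map_eq_bot_iff, QuotientGroup.ker_mk']

theorem Subgroup.closure_range_comp_eq_top {ι : Type*} {f : ι → G} (hf : closure (range f) = ⊤)
    {φ : G →* H} (hφ : Function.Surjective φ) : closure (range (φ ∘ f)) = ⊤ := by
  rw [range_comp, ← MonoidHom.map_closure, hf, map_top_of_surjective φ hφ]

theorem Subgroup.closure_range_comp_succAbove_eq_top {m : ℕ} {f : Fin (m + 1) → G}
    (hf : closure (range f) = ⊤) {i : Fin (m + 1)} (hi : f i = 1) :
    closure (range (f ∘ i.succAbove)) = ⊤ := by
  have : range f = insert 1 (range (f ∘ i.succAbove)) := by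
    rw [range_comp, Fin.range_succAbove, ← hi, ← image_insert_eq, insert_eq,
      union_compl_self, image_univ]
  rwa [this, closure_insert_one] at hf

theorem Subgroup.commutator_normalClosure_map_eq_bot {φ : G →* H} (hφ : Function.Surjective φ)
    {g : G} (h : ⁅normalClosure {g}, normalClosure {g}⁆ ≤ φ.ker) :
    ⁅normalClosure {φ g}, normalClosure {φ g}⁆ = ⊥ := by
  rwa [← image_singleton, ← map_normalClosure _ _ hφ, ← map_commutator, map_eq_bot_iff]

theorem Subgroup.lowerCentralSeries_eq_bot_of_commutator_normalClosure_eq_bot {m : ℕ}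
    (f : Fin m → G) (hf : closure (range f) = ⊤)
    (hcomm : ∀ i, ⁅normalClosure {f i}, normalClosure {f i}⁆ = ⊥) :
    lowerCentralSeries (⊤ : Subgroup G) m = ⊥ := by
  induction m generalizing G with
  | zero => simpa [range_eq_empty f] using hf.symm
  | succ m ih =>
    have hle (i : Fin (m + 1)) : lowerCentralSeries (⊤ : Subgroup G) m ≤ normalClosure {f i} := by
      let π := QuotientGroup.mk' (normalClosure {f i})
      have hπ : Function.Surjective π := QuotientGroup.mk'_surjective _
      have hπf : π (f i) = 1 := (QuotientGroup.eq_one_iff _).mpr (subset_normalClosure rfl)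
      refine (lowerCentralSeries_quotient_eq_bot_iff _ m).mp (ih (π ∘ f ∘ i.succAbove) ?_ ?_)
      · exact closure_range_comp_succAbove_eq_top (closure_range_comp_eq_top hf hπ) hπf
      · exact fun j ↦ commutator_normalClosure_map_eq_bot hπ ((hcomm _).trans_le bot_le)
    refine lowerCentralSeries_succ_eq_bot _ ?_
    rw [center_eq_iInf hf]
    refine le_iInf₂ fun _ ⟨i, hi⟩ ↦ hi ▸ ?_
    calc lowerCentralSeries ⊤ m ≤ normalClosure {f i} := hle i
      _ ≤ centralizer (normalClosure {f i}) := commutator_eq_bot_iff_le_centralizer.mp (hcomm i)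
      _ ≤ centralizer {f i} := centralizer_le subset_normalClosure

theorem Subgroup.lowerCentralSeries_quotient_eq_bot {m : ℕ} (f : Fin m → G)
    (hf : closure (range f) = ⊤) (N : Subgroup G) [N.Normal]
    (hN : ∀ i, ⁅normalClosure {f i}, normalClosure {f i}⁆ ≤ N) :
    lowerCentralSeries (⊤ : Subgroup (G ⧸ N)) m = ⊥ := by
  have hπ := QuotientGroup.mk'_surjective N
  refine lowerCentralSeries_eq_bot_of_commutator_normalClosure_eq_bot (QuotientGroup.mk' N ∘ f)
    (closure_range_comp_eq_top hf hπ) fun i ↦ commutator_normalClosure_map_eq_bot hπ ?_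
  rw [QuotientGroup.ker_mk']
  exact hN i

/-- Let `F` be the free group on generators `y_1, …, y_{n-1}` (here `m = n-1`)
and let `K_{n-1} = F / ∏_{i=1}^{n-1} [⟨⟨y_i⟩⟩, ⟨⟨y_i⟩⟩]`, where `⟨⟨y_i⟩⟩` is the normal closure
of `y_i` in `F` (the product of these normal subgroups is normal, so we may take the normal
closure of their union as the kernel).  Then `γ^n(K_{n-1}) = {1}`, i.e. `K_{n-1}` is nilpotent of
class at most `n - 1 = m`; with `γ^{m+1} = lowerCentralSeries _ m` this reads
`lowerCentralSeries K m = ⊥`. -/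
theorem milnor_link_group_nilpotent (m : ℕ) :
    letI F := FreeGroup (Fin m)
    letI N : Subgroup F := Subgroup.normalClosure
      (⋃ i : Fin m, (⁅Subgroup.normalClosure ({FreeGroup.of i} : Set F),
        Subgroup.normalClosure ({FreeGroup.of i} : Set F)⁆ : Subgroup F) : Set F)
    Subgroup.lowerCentralSeries (⊤ : Subgroup (F ⧸ N)) m = ⊥ :=
  lowerCentralSeries_quotient_eq_bot FreeGroup.of (FreeGroup.closure_range_of _) _
    fun i _ hx ↦ subset_normalClosure (mem_iUnion.mpr ⟨i, hx⟩)
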